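/- Let D ⊊ ℝⁿ be a bounded domain with diameter d, let x ∈ D and s > 0. Then the ζ_D-metric ball B_ζ(x,s) = {y ∈ D : ζ_D(x,y) < s} satisfies B(x, r) ∩ D ⊂ B_ζ(x, s) ⊂ B(x, R), where r = (1 − e^{−s})·η(x)/d and R = (e^s − 1)·η(x)/d. -/

import Mathlib

noncomputable def deltaD {n : ℕ} (D : Set (EuclideanSpace ℝ (Fin n)))
    (z : EuclideanSpace ℝ (Fin n)) : ℝ :=
  Metric.infDist z (frontier D)

noncomputable def etaD {n : ℕ} (D : Set (EuclideanSpace ℝ (Fin n)))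
    (z : EuclideanSpace ℝ (Fin n)) : ℝ :=
  deltaD D z * (Metric.diam D - deltaD D z)

noncomputable def zetaD {n : ℕ} (D : Set (EuclideanSpace ℝ (Fin n)))
    (x y : EuclideanSpace ℝ (Fin n)) : ℝ :=
  Real.log (1 + Metric.diam D * dist x y / min (etaD D x) (etaD D y))

noncomputable def zetaD' {n : ℕ} (D : Set (EuclideanSpace ℝ (Fin n)))
    (x y : EuclideanSpace ℝ (Fin n)) : ℝ :=
  (1 / 2) * Real.log ((1 + Metric.diam D * dist x y / etaD D x) *
    (1 + Metric.diam D * dist x y / etaD D y))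

/-! The ζ-ball is squeezed between two Euclidean balls because η is `d`-Lipschitz on `D`:
`δ` is 1-Lipschitz, `t ↦ t (d - t)` is `d`-Lipschitz on `[0, d/2]`, and `δ ≤ d/2` since the
ball of radius `δ(z)` about `z` lies in `D`. Hence `η(x) - d|x - y| ≤ min(η(x), η(y)) ≤ η(x)`,
and `ζ(x, y) < s` is the linear condition `d|x - y| < (eˢ - 1) min(η(x), η(y))`. -/

open Metric Set Real

section NormedSpace

variable {E : Type*} [NormedAddCommGroup E] [NormedSpace ℝ E] {D : Set E} {z : E}

theorem Metric.infDist_frontier_le_infDist_compl [FiniteDimensional ℝ E] (hz : z ∈ D)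
    (hD : D ≠ univ) : infDist z (frontier D) ≤ infDist z Dᶜ := by
  obtain ⟨y, hy, hzy⟩ := exists_mem_frontier_infDist_compl_eq_dist hz hD
  exact hzy ▸ infDist_le_dist_of_mem hy

theorem Metric.ball_infDist_frontier_subset [FiniteDimensional ℝ E] (hz : z ∈ D)
    (hD : D ≠ univ) : ball z (infDist z (frontier D)) ⊆ D :=
  (ball_subset_ball (infDist_frontier_le_infDist_compl hz hD)).trans ball_infDist_compl_subset

theorem IsOpen.infDist_frontier_pos (hopen : IsOpen D) (hz : z ∈ D) (hD : D ≠ univ) :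
    0 < infDist z (frontier D) := by
  refine (isClosed_frontier.notMem_iff_infDist_pos
    (nonempty_frontier_iff.2 ⟨⟨z, hz⟩, hD⟩)).1 fun hzf => ?_
  exact (hopen.frontier_eq ▸ hzf).2 hz

theorem Metric.two_mul_infDist_frontier_le_diam [FiniteDimensional ℝ E]
    (hbdd : Bornology.IsBounded D) (hz : z ∈ D) (hD : D ≠ univ) :
    2 * infDist z (frontier D) ≤ diam D := by
  obtain ⟨w, hw⟩ := nonempty_compl.2 hD
  have : Nontrivial E := nontrivial_of_ne z w fun h => hw (h ▸ hz)
  rw [← diam_ball_eq z infDist_nonneg]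
  exact diam_mono (ball_infDist_frontier_subset hz hD) hbdd

end NormedSpace

theorem abs_mul_sub_sub_mul_sub_le {a b d : ℝ} (ha : 0 ≤ a) (hb : 0 ≤ b) (had : 2 * a ≤ d)
    (hbd : 2 * b ≤ d) : |a * (d - a) - b * (d - b)| ≤ d * |a - b| := by
  have hfactor : a * (d - a) - b * (d - b) = (a - b) * (d - a - b) := by ring
  rw [hfactor, abs_mul, mul_comm, abs_of_nonneg (by linarith : 0 ≤ d - a - b)]
  gcongr
  linarith

theorem lt_exp_sub_one_mul_of_lt_one_sub_exp_neg_mul {t η m s : ℝ} (ht : 0 ≤ t) (hη : 0 < η)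
    (hm : η - t ≤ m) (h : t < (1 - exp (-s)) * η) : t < (exp s - 1) * m := by
  have hexp : exp s * exp (-s) = 1 := by rw [← exp_add, add_neg_cancel, exp_zero]
  have hs : 0 < exp s - 1 := by
    have : exp (-s) < 1 := by nlinarith
    exact sub_pos.2 (one_lt_exp_iff.2 (by simpa using this))
  calc t < exp s * (1 - exp (-s)) * η - (exp s - 1) * t := by nlinarith
    _ = (exp s - 1) * (η - t) := by rw [mul_sub, hexp]; ring
    _ ≤ (exp s - 1) * m := by gcongr

section Domain

variable {n : ℕ} {D : Set (EuclideanSpace ℝ (Fin n))} {x y z : EuclideanSpace ℝ (Fin n)}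

theorem etaD_pos (hopen : IsOpen D) (hproper : D ≠ univ) (hbdd : Bornology.IsBounded D)
    (hz : z ∈ D) : 0 < etaD D z := by
  have hδ : 0 < deltaD D z := hopen.infDist_frontier_pos hz hproper
  have hδd : 2 * deltaD D z ≤ diam D := two_mul_infDist_frontier_le_diam hbdd hz hproper
  exact mul_pos hδ (by linarith)

theorem etaD_sub_le (hproper : D ≠ univ) (hbdd : Bornology.IsBounded D) (hx : x ∈ D)
    (hy : y ∈ D) : etaD D x - diam D * dist x y ≤ etaD D y := by
  have hδ : |deltaD D x - deltaD D y| ≤ dist x y := by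
    simpa [Real.dist_eq, deltaD] using (lipschitz_infDist_pt (frontier D)).dist_le_mul x y
  have hη : |etaD D x - etaD D y| ≤ diam D * |deltaD D x - deltaD D y| :=
    abs_mul_sub_sub_mul_sub_le infDist_nonneg infDist_nonneg
      (two_mul_infDist_frontier_le_diam hbdd hx hproper)
      (two_mul_infDist_frontier_le_diam hbdd hy hproper)
  linarith [(abs_sub_le_iff.1 hη).1, mul_le_mul_of_nonneg_left hδ (diam_nonneg (s := D))]

theorem zetaD_lt_iff (hm : 0 < min (etaD D x) (etaD D y)) {s : ℝ} :
    zetaD D x y < s ↔ diam D * dist x y < (exp s - 1) * min (etaD D x) (etaD D y) := by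
  have h : 0 ≤ diam D * dist x y / min (etaD D x) (etaD D y) :=
    div_nonneg (mul_nonneg diam_nonneg dist_nonneg) hm.le
  rw [zetaD, log_lt_iff_lt_exp (by linarith), ← lt_sub_iff_add_lt', div_lt_iff₀ hm]

end Domain

theorem stmt_18_general {n : ℕ} (D : Set (EuclideanSpace ℝ (Fin n)))
    (hopen : IsOpen D) (hproper : D ≠ Set.univ)
    (hbdd : Bornology.IsBounded D)
    (x : EuclideanSpace ℝ (Fin n)) (hx : x ∈ D) (s : ℝ) :
    Metric.ball x ((1 - Real.exp (-s)) * etaD D x / Metric.diam D) ∩ D ⊆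
        {y ∈ D | zetaD D x y < s} ∧
      {y ∈ D | zetaD D x y < s} ⊆
        Metric.ball x ((Real.exp s - 1) * etaD D x / Metric.diam D) := by
  have hηx := etaD_pos hopen hproper hbdd hx
  have hd : 0 < diam D := lt_of_lt_of_le (by linarith [hopen.infDist_frontier_pos hx hproper])
    (two_mul_infDist_frontier_le_diam hbdd hx hproper)
  have hdist_nonneg : ∀ y, 0 ≤ diam D * dist x y := fun y => mul_nonneg hd.le dist_nonneg
  constructor
  · rintro y ⟨hxy, hy⟩
    rw [mem_ball, dist_comm, lt_div_iff₀ hd, mul_comm] at hxy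
    refine ⟨hy, (zetaD_lt_iff (lt_min hηx (etaD_pos hopen hproper hbdd hy))).2 ?_⟩
    refine lt_exp_sub_one_mul_of_lt_one_sub_exp_neg_mul (hdist_nonneg y) hηx ?_ hxy
    exact le_min (by linarith [hdist_nonneg y]) (etaD_sub_le hproper hbdd hx hy)
  · rintro y ⟨hy, hζ⟩
    have hm := lt_min hηx (etaD_pos hopen hproper hbdd hy)
    rw [zetaD_lt_iff hm] at hζ
    have hs : 0 < exp s - 1 := pos_of_mul_pos_left ((hdist_nonneg y).trans_lt hζ) hm.le
    rw [mem_ball, dist_comm, lt_div_iff₀ hd, mul_comm]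
    exact hζ.trans_le (mul_le_mul_of_nonneg_left (min_le_left _ _) hs.le)

theorem stmt_18 {n : ℕ} (hn : 2 ≤ n) (D : Set (EuclideanSpace ℝ (Fin n)))
    (hopen : IsOpen D) (hconn : IsConnected D) (hproper : D ≠ Set.univ)
    (hbdd : Bornology.IsBounded D)
    (x : EuclideanSpace ℝ (Fin n)) (hx : x ∈ D) (s : ℝ) (hs : 0 < s) :
    Metric.ball x ((1 - Real.exp (-s)) * etaD D x / Metric.diam D) ∩ D ⊆
        {y ∈ D | zetaD D x y < s} ∧
      {y ∈ D | zetaD D x y < s} ⊆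
        Metric.ball x ((Real.exp s - 1) * etaD D x / Metric.diam D) :=
  stmt_18_general D hopen hproper hbdd x hx s
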